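/- arXiv:1806.05215 — 3 statements merged into one kernel-verified Lean document; each statement's English description precedes it below -/
import Mathlib

section
/- Let H be a real Hilbert space and f : H → ℝ a convex continuous function. Suppose there exists a sequence (ε_k) of positive reals with ε_k → 0 and, for each k, an element u_k ∈ H minimizing the functional u ↦ f(u) + ε_k·‖u‖² over H, such that sup_k ‖u_k‖ < ∞. Then f attains its infimum on H, i.e., there exists u* ∈ H with f(u*) ≤ f(u) for all u ∈ H. -/
/-!
Tikhonov regularization makes `f + ε‖·‖²` strongly convex, so its minimizer `u_ε` is
approached quadratically: `f(u_ε) + ε‖u_ε‖² + (ε/2)‖v - u_ε‖² ≤ f(v) + ε‖v‖²`. Comparing the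
minimizers for `ε ≥ δ > 0` this way gives `‖u_δ - u_ε‖² ≤ 2 (‖u_δ‖² - ‖u_ε‖²)`, so `‖u_ε‖`
increases as `ε ↓ 0` towards its finite supremum, which makes the `u_{ε_k}` a Cauchy sequence.
Its limit minimizes `f`, since `f(u_ε) ≤ f(v) + ε‖v‖²` for every `v`.
-/

open Filter Set Topology

lemma cauchySeq_of_forall_exists_eventually_dist_lt {α β : Type*} [PseudoMetricSpace α]
    [Nonempty β] [SemilatticeSup β] {u : β → α}
    (h : ∀ δ > 0, ∃ x, ∀ᶠ n in atTop, dist (u n) x < δ) : CauchySeq u := by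
  refine Metric.cauchySeq_iff.2 fun δ hδ => ?_
  obtain ⟨x, hx⟩ := h (δ / 2) (half_pos hδ)
  obtain ⟨N, hN⟩ := eventually_atTop.1 hx
  exact ⟨N, fun m hm n hn =>
    (dist_triangle_right _ _ x).trans_lt (by linarith [hN m hm, hN n hn])⟩

section Tikhonov

variable {E : Type*} [NormedAddCommGroup E] {s : Set E} {f : E → ℝ}

noncomputable def tikhonov (f : E → ℝ) (a : ℝ) (x : E) : ℝ := f x + a * ‖x‖ ^ 2

lemma le_add_mul_sq_norm_of_isMinOn_tikhonov {a : ℝ} {u v : E}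
    (hu : IsMinOn (tikhonov f a) s u) (ha : 0 ≤ a) (hv : v ∈ s) : f u ≤ f v + a * ‖v‖ ^ 2 := by
  have := isMinOn_iff.1 hu v hv
  simp only [tikhonov] at this
  nlinarith [sq_nonneg ‖u‖]

lemma isMinOn_of_tendsto_of_isMinOn_tikhonov {ι : Type*} {l : Filter ι} [l.NeBot] {ε : ι → ℝ}
    {u : ι → E} {x : E} (hfx : ContinuousAt f x) (hε : ∀ k, 0 ≤ ε k) (hε0 : Tendsto ε l (𝓝 0))
    (hu : ∀ k, IsMinOn (tikhonov f (ε k)) s (u k)) (hlim : Tendsto u l (𝓝 x)) : IsMinOn f s x := by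
  refine isMinOn_iff.2 fun v hv => ?_
  have hbound (k : ι) : f (u k) ≤ f v + ε k * ‖v‖ ^ 2 :=
    le_add_mul_sq_norm_of_isMinOn_tikhonov (hu k) (hε k) hv
  have hrhs : Tendsto (fun k => f v + ε k * ‖v‖ ^ 2) l (𝓝 (f v)) := by
    simpa using tendsto_const_nhds.add (hε0.mul_const (‖v‖ ^ 2))
  exact le_of_tendsto_of_tendsto' (hfx.tendsto.comp hlim) hrhs hbound

section NormedSpace

variable [NormedSpace ℝ E] {m : ℝ} {g : E → ℝ} {u v : E}

lemma StrongConvexOn.add_mul_sq_norm_sub_le_of_isMinOn (hg : StrongConvexOn s m g)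
    (hu : IsMinOn g s u) (hus : u ∈ s) (hvs : v ∈ s) :
    g u + m / 4 * ‖v - u‖ ^ 2 ≤ g v := by
  have hhalf : (0 : ℝ) ≤ 1 / 2 := by norm_num
  have hmid := hg.2 hvs hus hhalf hhalf (by norm_num)
  have hmin := isMinOn_iff.1 hu _ (hg.1 hvs hus hhalf hhalf (by norm_num))
  simp only [smul_eq_mul] at hmid
  linarith

end NormedSpace

section InnerProductSpace

variable [InnerProductSpace ℝ E] {a b : ℝ} {u w : E}

lemma ConvexOn.strongConvexOn_tikhonov (hf : ConvexOn ℝ s f) (a : ℝ) :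
    StrongConvexOn s (2 * a) (tikhonov f a) := by
  rw [strongConvexOn_iff_convex]
  convert hf using 2 with x
  simp only [tikhonov]
  ring

lemma ConvexOn.mul_sq_norm_sub_le_of_isMinOn_tikhonov (hf : ConvexOn ℝ s f)
    (hu : IsMinOn (tikhonov f a) s u) (hw : IsMinOn (tikhonov f b) s w) (hus : u ∈ s)
    (hws : w ∈ s) :
    (a + b) / 2 * ‖u - w‖ ^ 2 ≤ (a - b) * (‖w‖ ^ 2 - ‖u‖ ^ 2) := by
  have hu' := (hf.strongConvexOn_tikhonov a).add_mul_sq_norm_sub_le_of_isMinOn hu hus hws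
  have hw' := (hf.strongConvexOn_tikhonov b).add_mul_sq_norm_sub_le_of_isMinOn hw hws hus
  rw [norm_sub_rev] at hu'
  simp only [tikhonov] at hu' hw'
  linarith

lemma ConvexOn.sq_norm_sub_le_of_isMinOn_tikhonov (hf : ConvexOn ℝ s f) (hb : 0 < b)
    (hba : b ≤ a) (hu : IsMinOn (tikhonov f a) s u) (hw : IsMinOn (tikhonov f b) s w)
    (hus : u ∈ s) (hws : w ∈ s) :
    ‖u - w‖ ^ 2 ≤ 2 * (‖w‖ ^ 2 - ‖u‖ ^ 2) := by
  have key := hf.mul_sq_norm_sub_le_of_isMinOn_tikhonov hu hw hus hws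
  rcases le_or_gt (‖u‖ ^ 2) (‖w‖ ^ 2) with hle | hlt
  · nlinarith
  · -- `‖w‖ < ‖u‖` forces `(a + b) ‖u - w‖² ≤ 0`, i.e. `u = w`
    have : u = w := by
      rw [← sub_eq_zero, ← norm_eq_zero, ← sq_eq_zero_iff]
      nlinarith [sq_nonneg ‖u - w‖]
    simp [this] at hlt

lemma ConvexOn.cauchySeq_of_isMinOn_tikhonov {ε : ℕ → ℝ} {u : ℕ → E} (hf : ConvexOn ℝ s f)
    (hε : ∀ k, 0 < ε k) (hε0 : Tendsto ε atTop (𝓝 0))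
    (hu : ∀ k, IsMinOn (tikhonov f (ε k)) s (u k)) (hus : ∀ k, u k ∈ s)
    (hbdd : BddAbove (range fun k => ‖u k‖ ^ 2)) : CauchySeq u := by
  refine cauchySeq_of_forall_exists_eventually_dist_lt fun δ hδ => ?_
  obtain ⟨K, hK⟩ : ∃ K, (⨆ k, ‖u k‖ ^ 2) - δ ^ 2 / 2 < ‖u K‖ ^ 2 :=
    exists_lt_of_lt_ciSup (sub_lt_self _ (by positivity))
  refine ⟨u K, (hε0.eventually (ge_mem_nhds (hε K))).mono fun n hn => ?_⟩
  have hclose := hf.sq_norm_sub_le_of_isMinOn_tikhonov (hε n) hn (hu K) (hu n) (hus K) (hus n)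
  have hsup : ‖u n‖ ^ 2 ≤ ⨆ k, ‖u k‖ ^ 2 := le_ciSup hbdd n
  rw [dist_eq_norm, norm_sub_rev]
  exact lt_of_pow_lt_pow_left₀ 2 hδ.le (by linarith)

end InnerProductSpace

end Tikhonov

/-- If a convex continuous function on a real Hilbert space admits, along some
sequence `ε_k → 0⁺`, minimizers `u_k` of the Tikhonov-regularized functionals
`f + ε_k‖·‖²` with `sup_k ‖u_k‖ < ∞`, then `f` attains its infimum. -/
theorem convex_attains_min_of_bounded_tikhonov_minimizers
    {H : Type*} [NormedAddCommGroup H] [InnerProductSpace ℝ H] [CompleteSpace H]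
    (f : H → ℝ) (hconv : ConvexOn ℝ Set.univ f) (hcont : Continuous f)
    (ε : ℕ → ℝ) (hεpos : ∀ k, 0 < ε k) (hε0 : Tendsto ε atTop (nhds 0))
    (u : ℕ → H)
    (hmin : ∀ k, ∀ v : H, f (u k) + ε k * ‖u k‖ ^ 2 ≤ f v + ε k * ‖v‖ ^ 2)
    (hbdd : ∃ M : ℝ, ∀ k, ‖u k‖ ≤ M) :
    ∃ ustar : H, ∀ v : H, f ustar ≤ f v := by
  obtain ⟨M, hM⟩ := hbdd
  have hu : ∀ k, IsMinOn (tikhonov f (ε k)) univ (u k) := fun k => isMinOn_univ_iff.2 (hmin k)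
  have hbdd_sq : BddAbove (range fun k => ‖u k‖ ^ 2) :=
    ⟨M ^ 2, forall_mem_range.2 fun k => pow_le_pow_left₀ (norm_nonneg _) (hM k) 2⟩
  obtain ⟨ustar, hlim⟩ := cauchySeq_tendsto_of_complete
    (hconv.cauchySeq_of_isMinOn_tikhonov hεpos hε0 hu (fun _ => mem_univ _) hbdd_sq)
  exact ⟨ustar, isMinOn_univ_iff.1 <| isMinOn_of_tendsto_of_isMinOn_tikhonov hcont.continuousAt
    (fun k => (hεpos k).le) hε0 hu hlim⟩
end

section
/- Let H be a real Hilbert space and f : H → ℝ a convex continuous function that attains its infimum on H. For each ε > 0, let u_ε ∈ H be a minimizer of the regularized functional u ↦ f(u) + ε·‖u‖². Then there exists u* ∈ H such that: (1) u* minimizes f; (2) ‖u*‖ ≤ ‖v‖ for every minimizer v of f; and (3) u_ε converges weakly to u* as ε → 0⁺, i.e., for every y ∈ H the inner product ⟨u_ε, y⟩ tends to ⟨u*, y⟩ along the filter of positive ε tending to 0. -/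
/-!
Write `u ε` for the minimizer of `f + ε‖·‖²`. Comparing the minimality of `u a` and `u b` with
the strong convexity of `f + a‖·‖²` gives, for `0 < b ≤ a`,
`‖u a - u b‖² ≤ 2 (‖u b‖² - ‖u a‖²)`. The norms `‖u ε‖` increase as `ε ↓ 0` and are bounded by the
norm of any minimizer of `f`, so they converge; hence `u ε` is Cauchy and converges, even strongly,
to some `u*`. Passing to the limit in `f (u ε) ≤ f v + ε‖v‖²` and `‖u ε‖ ≤ ‖v‖` shows that `u*` is
a minimizer of minimal norm.
-/

open Filter Set Topology

theorem cauchy_map_of_norm_sub_sq_le {ι E : Type*} [SeminormedAddCommGroup E] {l : Filter ι}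
    {u : ι → E} {N : ι → ℝ} (C : ℝ) (hN : Cauchy (map N l))
    (h : ∀ᶠ p in l ×ˢ l, ‖u p.1 - u p.2‖ ^ 2 ≤ C * |N p.1 - N p.2|) : Cauchy (map u l) := by
  obtain ⟨hl, hN⟩ := (IsUniformAddGroup.cauchy_map_iff_tendsto l N).1 hN
  refine (IsUniformAddGroup.cauchy_map_iff_tendsto l u).2
    ⟨hl, squeeze_zero_norm' (a := fun p => √(C * |N p.1 - N p.2|)) ?_ ?_⟩
  · filter_upwards [h] with p hp
    exact Real.le_sqrt_of_sq_le hp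
  · simpa using (hN.abs.const_mul C).sqrt

theorem norm_midpoint_sq {H : Type*} [NormedAddCommGroup H] [InnerProductSpace ℝ H] (x y : H) :
    ‖(1 / 2 : ℝ) • x + (1 / 2 : ℝ) • y‖ ^ 2 = (‖x‖ ^ 2 + ‖y‖ ^ 2) / 2 - ‖x - y‖ ^ 2 / 4 := by
  have hmid : (1 / 2 : ℝ) • x + (1 / 2 : ℝ) • y = (1 / 2 : ℝ) • (x + y) := by module
  rw [hmid, norm_smul, mul_pow, Real.norm_of_nonneg (by norm_num)]
  linear_combination parallelogram_law_with_norm ℝ x y / 4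

def IsTikhonovMin {H : Type*} [Norm H] (f : H → ℝ) (ε : ℝ) (x : H) : Prop :=
  ∀ v, f x + ε * ‖x‖ ^ 2 ≤ f v + ε * ‖v‖ ^ 2

namespace IsTikhonovMin

section Normed

variable {H : Type*} [SeminormedAddCommGroup H] {f : H → ℝ} {a b ε : ℝ} {x y : H}

theorem apply_le (hx : IsTikhonovMin f ε x) (hε : 0 ≤ ε) (v : H) :
    f x ≤ f v + ε * ‖v‖ ^ 2 := by
  nlinarith [hx v, mul_nonneg hε (sq_nonneg ‖x‖)]

theorem norm_le_of_isMin (hx : IsTikhonovMin f ε x) (hε : 0 < ε) {v : H}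
    (hv : ∀ w, f v ≤ f w) : ‖x‖ ≤ ‖v‖ := by
  have hsq : ‖x‖ ^ 2 ≤ ‖v‖ ^ 2 := by nlinarith [hx v, hv x]
  exact (sq_le_sq₀ (norm_nonneg _) (norm_nonneg _)).1 hsq

theorem norm_sq_le_of_lt (hx : IsTikhonovMin f a x) (hy : IsTikhonovMin f b y) (hba : b < a) :
    ‖x‖ ^ 2 ≤ ‖y‖ ^ 2 := by
  nlinarith [hx y, hy x]

end Normed

section InnerProduct

variable {H : Type*} [NormedAddCommGroup H] [InnerProductSpace ℝ H] {f : H → ℝ} {a b ε : ℝ}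
  {x y : H}

/-- Strong convexity of `f + ε‖·‖²`, tested at the midpoint of `x` and `w`. -/
theorem half_mul_norm_sub_sq_le (hf : ConvexOn ℝ univ f) (hx : IsTikhonovMin f ε x) (w : H) :
    ε / 2 * ‖x - w‖ ^ 2 ≤ (f w + ε * ‖w‖ ^ 2) - (f x + ε * ‖x‖ ^ 2) := by
  have hmid := hx ((1 / 2 : ℝ) • x + (1 / 2 : ℝ) • w)
  have hconv := hf.2 (mem_univ x) (mem_univ w) (by norm_num : (0 : ℝ) ≤ 1 / 2)
    (by norm_num : (0 : ℝ) ≤ 1 / 2) (by norm_num)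
  rw [norm_midpoint_sq] at hmid
  simp only [smul_eq_mul] at hconv
  nlinarith

theorem norm_sub_sq_le_abs (hf : ConvexOn ℝ univ f) (hx : IsTikhonovMin f a x)
    (hy : IsTikhonovMin f b y) (ha : 0 < a) (hb : 0 < b) :
    ‖x - y‖ ^ 2 ≤ 2 * |‖x‖ ^ 2 - ‖y‖ ^ 2| := by
  wlog hba : b ≤ a generalizing a b x y
  · rw [norm_sub_rev, abs_sub_comm]
    exact this hy hx hb ha (by linarith)
  have key : a / 2 * ‖x - y‖ ^ 2 ≤ (a - b) * (‖y‖ ^ 2 - ‖x‖ ^ 2) := by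
    linarith [hx.half_mul_norm_sub_sq_le hf y, hy x]
  rw [abs_sub_comm]
  nlinarith [le_abs_self (‖y‖ ^ 2 - ‖x‖ ^ 2), abs_nonneg (‖y‖ ^ 2 - ‖x‖ ^ 2), sq_nonneg ‖x - y‖]

end InnerProduct

end IsTikhonovMin

section Family

variable {H : Type*} [NormedAddCommGroup H] {f : H → ℝ} {u : ℝ → H} {v : H}

theorem exists_tendsto_norm_sq_of_isTikhonovMin (hu : ∀ ε, 0 < ε → IsTikhonovMin f ε (u ε))
    (hv : ∀ w, f v ≤ f w) : ∃ L, Tendsto (fun ε => ‖u ε‖ ^ 2) (𝓝[>] 0) (𝓝 L) := by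
  have hanti : AntitoneOn (fun ε => ‖u ε‖ ^ 2) (Ioi 0) := fun b hb a ha hba =>
    hba.eq_or_lt.elim (fun h => by rw [h]) fun h => (hu a ha).norm_sq_le_of_lt (hu b hb) h
  have hbdd : BddAbove ((fun ε => ‖u ε‖ ^ 2) '' Ioi 0) := by
    refine ⟨‖v‖ ^ 2, ?_⟩
    rintro _ ⟨ε, hε, rfl⟩
    exact pow_le_pow_left₀ (norm_nonneg _) ((hu ε hε).norm_le_of_isMin hε hv) 2
  exact ⟨_, hanti.tendsto_nhdsGT hbdd⟩

theorem apply_le_of_tendsto_isTikhonovMin (hf : Continuous f)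
    (hu : ∀ ε, 0 < ε → IsTikhonovMin f ε (u ε)) {ustar : H}
    (hT : Tendsto u (𝓝[>] 0) (𝓝 ustar)) (v : H) : f ustar ≤ f v := by
  have hbound : Tendsto (fun ε : ℝ => f v + ε * ‖v‖ ^ 2) (𝓝[>] 0) (𝓝 (f v)) :=
    (Continuous.tendsto' (by fun_prop) 0 _ (by simp)).mono_left nhdsWithin_le_nhds
  refine le_of_tendsto_of_tendsto ((hf.tendsto ustar).comp hT) hbound ?_
  filter_upwards [self_mem_nhdsWithin] with ε hε
  exact (hu ε hε).apply_le hε.le v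

variable [InnerProductSpace ℝ H]

theorem exists_tendsto_of_isTikhonovMin [CompleteSpace H] (hf : ConvexOn ℝ univ f)
    (hu : ∀ ε, 0 < ε → IsTikhonovMin f ε (u ε)) (hv : ∀ w, f v ≤ f w) :
    ∃ ustar, Tendsto u (𝓝[>] 0) (𝓝 ustar) := by
  obtain ⟨L, hL⟩ := exists_tendsto_norm_sq_of_isTikhonovMin hu hv
  refine CompleteSpace.complete (cauchy_map_of_norm_sub_sq_le 2 hL.cauchy_map ?_)
  filter_upwards [prod_mem_prod self_mem_nhdsWithin self_mem_nhdsWithin] with p ⟨ha, hb⟩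
  exact (hu p.1 ha).norm_sub_sq_le_abs hf (hu p.2 hb) ha hb

end Family

/-- If a convex continuous function `f` on a real Hilbert space attains its
infimum and, for every `ε > 0`, `u ε` minimizes `f + ε‖·‖²`, then there is a
minimizer `u*` of `f`, of minimal norm among all minimizers, such that
`u ε → u*` weakly as `ε → 0⁺`. -/
theorem tikhonov_minimizers_weak_limit
    {H : Type*} [NormedAddCommGroup H] [InnerProductSpace ℝ H] [CompleteSpace H]
    (f : H → ℝ) (hconv : ConvexOn ℝ Set.univ f) (hcont : Continuous f)
    (hattain : ∃ v : H, ∀ w : H, f v ≤ f w)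
    (u : ℝ → H)
    (hmin : ∀ ε : ℝ, 0 < ε → ∀ v : H, f (u ε) + ε * ‖u ε‖ ^ 2 ≤ f v + ε * ‖v‖ ^ 2) :
    ∃ ustar : H,
      (∀ v : H, f ustar ≤ f v) ∧
      (∀ v : H, (∀ w : H, f v ≤ f w) → ‖ustar‖ ≤ ‖v‖) ∧
      (∀ y : H,
        Tendsto (fun ε : ℝ => (inner ℝ (u ε) y : ℝ)) (nhdsWithin 0 (Ioi 0))
          (nhds (inner ℝ ustar y))) := by
  have hu : ∀ ε, 0 < ε → IsTikhonovMin f ε (u ε) := hmin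
  obtain ⟨v₀, hv₀⟩ := hattain
  obtain ⟨ustar, hT⟩ := exists_tendsto_of_isTikhonovMin hconv hu hv₀
  refine ⟨ustar, apply_le_of_tendsto_isTikhonovMin hcont hu hT, fun v hv => ?_,
    fun y => hT.inner tendsto_const_nhds⟩
  refine le_of_tendsto hT.norm ?_
  filter_upwards [self_mem_nhdsWithin] with ε hε
  exact (hu ε hε).norm_le_of_isMin hε hv
end

section
/- Let H be a real Hilbert space and f : H → ℝ a convex continuous function that attains its infimum on H. For each ε > 0, let u_ε ∈ H be a minimizer of the regularized functional u ↦ f(u) + ε·‖u‖². Then the family (u_ε) converges strongly (in norm) as ε → 0⁺ to an element u* ∈ H that minimizes f and satisfies ‖u*‖ ≤ ‖v‖ for every minimizer v of f. -/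
/-!
Comparing the optimality of `u ε` and `u δ` against their midpoint, and using convexity of `f`
together with the parallelogram law, gives `‖u ε - u δ‖² ≤ 2 |‖u ε‖² - ‖u δ‖²|`. Optimality
against a minimizer `v` of `f` gives `‖u ε‖ ≤ ‖v‖`, and `ε ↦ ‖u ε‖²` is antitone, so `‖u ε‖²`
converges as `ε → 0⁺` and `u` is Cauchy there. The limit minimizes `f` because
`f (u ε) ≤ f v + ε ‖v‖²`, and it has minimal norm because `‖u ε‖ ≤ ‖v‖` passes to the limit.
-/

open Filter Set Topology

def IsTikhonovFamily {E : Type*} [Norm E] (f : E → ℝ) (u : ℝ → E) : Prop :=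
  ∀ ε : ℝ, 0 < ε → ∀ v : E, f (u ε) + ε * ‖u ε‖ ^ 2 ≤ f v + ε * ‖v‖ ^ 2

theorem cauchy_map_of_dist_sq_le {ι α : Type*} [PseudoMetricSpace α] {l : Filter ι} [NeBot l]
    {g : ι → α} {φ : ι → ℝ} {c : ℝ} (C : ℝ) (hφ : Tendsto φ l (𝓝 c))
    (h : ∀ᶠ p in l ×ˢ l, dist (g p.1) (g p.2) ^ 2 ≤ C * dist (φ p.1) (φ p.2)) :
    Cauchy (map g l) := by
  have hφ_dist : Tendsto (fun p : ι × ι => dist (φ p.1) (φ p.2)) (l ×ˢ l) (𝓝 0) :=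
    tendsto_uniformity_iff_dist_tendsto_zero.1 (cauchy_map_iff.1 hφ.cauchy_map).2
  have hbound : Tendsto (fun p : ι × ι => √(C * dist (φ p.1) (φ p.2))) (l ×ˢ l) (𝓝 0) := by
    simpa using ((hφ_dist.const_mul C).sqrt)
  refine cauchy_map_iff.2 ⟨‹_›, tendsto_uniformity_iff_dist_tendsto_zero.2 ?_⟩
  refine squeeze_zero' (Eventually.of_forall fun _ => dist_nonneg) ?_ hbound
  filter_upwards [h] with p hp
  simpa [abs_of_nonneg dist_nonneg] using Real.abs_le_sqrt hp

namespace IsTikhonovFamily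

section Normed

variable {E : Type*} [SeminormedAddCommGroup E] {f : E → ℝ} {u : ℝ → E}

theorem norm_le_of_forall_le (hu : IsTikhonovFamily f u) {v : E} (hv : ∀ w, f v ≤ f w)
    {ε : ℝ} (hε : 0 < ε) : ‖u ε‖ ≤ ‖v‖ := by
  have hsq : ‖u ε‖ ^ 2 ≤ ‖v‖ ^ 2 := by nlinarith [hu ε hε v, hv (u ε)]
  exact le_of_pow_le_pow_left₀ two_ne_zero (norm_nonneg v) hsq

theorem antitoneOn_norm_sq (hu : IsTikhonovFamily f u) :
    AntitoneOn (fun ε => ‖u ε‖ ^ 2) (Ioi 0) := by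
  intro ε (hε : 0 < ε) δ _ hεδ
  rcases hεδ.eq_or_lt with rfl | hlt
  · exact le_rfl
  · have hδ : 0 < δ := hε.trans hlt
    -- adding the two optimality conditions gives `(δ - ε) (‖u ε‖² - ‖u δ‖²) ≥ 0`
    nlinarith [hu ε hε (u δ), hu δ hδ (u ε)]

theorem forall_le_of_tendsto (hu : IsTikhonovFamily f u) (hf : Continuous f) {ustar : E}
    (hlim : Tendsto u (𝓝[>] 0) (𝓝 ustar)) (v : E) : f ustar ≤ f v := by
  have hreg : Tendsto (fun ε : ℝ => f v + ε * ‖v‖ ^ 2) (𝓝[>] 0) (𝓝 (f v)) :=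
    ((continuous_const.add (continuous_id.mul continuous_const)).tendsto' 0 _
      (by simp)).mono_left nhdsWithin_le_nhds
  refine le_of_tendsto_of_tendsto ((hf.tendsto ustar).comp hlim) hreg ?_
  filter_upwards [self_mem_nhdsWithin] with ε (hε : 0 < ε)
  show f (u ε) ≤ f v + ε * ‖v‖ ^ 2
  nlinarith [hu ε hε v, mul_nonneg hε.le (sq_nonneg ‖u ε‖)]

theorem norm_le_of_tendsto (hu : IsTikhonovFamily f u) {ustar : E}
    (hlim : Tendsto u (𝓝[>] 0) (𝓝 ustar)) {v : E} (hv : ∀ w, f v ≤ f w) : ‖ustar‖ ≤ ‖v‖ :=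
  le_of_tendsto hlim.norm <| eventually_nhdsWithin_of_forall fun _ hε =>
    hu.norm_le_of_forall_le hv hε

end Normed

section InnerProduct

variable {E : Type*} [SeminormedAddCommGroup E] [InnerProductSpace ℝ E] {f : E → ℝ} {u : ℝ → E}

theorem add_mul_norm_sub_sq_le (hu : IsTikhonovFamily f u) (hf : ConvexOn ℝ univ f)
    {ε δ : ℝ} (hε : 0 < ε) (hδ : 0 < δ) :
    (ε + δ) * ‖u ε - u δ‖ ^ 2 ≤ 2 * (δ - ε) * (‖u ε‖ ^ 2 - ‖u δ‖ ^ 2) := by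
  let m : E := (1 / 2 : ℝ) • u ε + (1 / 2 : ℝ) • u δ
  have hfm : f m ≤ 1 / 2 * f (u ε) + 1 / 2 * f (u δ) :=
    hf.2 (mem_univ _) (mem_univ _) (by norm_num) (by norm_num) (by norm_num)
  have hm : 4 * ‖m‖ ^ 2 = 2 * ‖u ε‖ ^ 2 + 2 * ‖u δ‖ ^ 2 - ‖u ε - u δ‖ ^ 2 := by
    have hnorm : ‖m‖ = 1 / 2 * ‖u ε + u δ‖ := by
      rw [show m = (1 / 2 : ℝ) • (u ε + u δ) from (smul_add ..).symm, norm_smul]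
      norm_num
    rw [hnorm]
    linarith [parallelogram_law_with_norm ℝ (u ε) (u δ)]
  nlinarith [hu ε hε m, hu δ hδ m]

theorem norm_sub_sq_le (hu : IsTikhonovFamily f u) (hf : ConvexOn ℝ univ f)
    {ε δ : ℝ} (hε : 0 < ε) (hδ : 0 < δ) :
    ‖u ε - u δ‖ ^ 2 ≤ 2 * |‖u ε‖ ^ 2 - ‖u δ‖ ^ 2| := by
  have hweighted := hu.add_mul_norm_sub_sq_le hf hε hδ
  have hweights : (δ - ε) * (‖u ε‖ ^ 2 - ‖u δ‖ ^ 2) ≤ (ε + δ) * |‖u ε‖ ^ 2 - ‖u δ‖ ^ 2| := by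
    calc (δ - ε) * (‖u ε‖ ^ 2 - ‖u δ‖ ^ 2)
        ≤ |δ - ε| * |‖u ε‖ ^ 2 - ‖u δ‖ ^ 2| := by
          rw [← abs_mul]; exact le_abs_self _
      _ ≤ (ε + δ) * |‖u ε‖ ^ 2 - ‖u δ‖ ^ 2| := by
          gcongr; exact abs_sub_le_iff.2 ⟨by linarith, by linarith⟩
  exact le_of_mul_le_mul_left (by linarith) (by linarith : (0 : ℝ) < ε + δ)

theorem cauchy_map (hu : IsTikhonovFamily f u) (hf : ConvexOn ℝ univ f)
    (hattain : ∃ v : E, ∀ w, f v ≤ f w) : Cauchy (map u (𝓝[>] 0)) := by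
  obtain ⟨v, hv⟩ := hattain
  have hbdd : BddAbove ((fun ε => ‖u ε‖ ^ 2) '' Ioi 0) := by
    refine ⟨‖v‖ ^ 2, ?_⟩
    rintro _ ⟨ε, hε, rfl⟩
    exact pow_le_pow_left₀ (norm_nonneg _) (hu.norm_le_of_forall_le hv hε) 2
  refine cauchy_map_of_dist_sq_le 2 (hu.antitoneOn_norm_sq.tendsto_nhdsGT hbdd) ?_
  filter_upwards [prod_mem_prod self_mem_nhdsWithin self_mem_nhdsWithin]
    with ⟨ε, δ⟩ ⟨hε, hδ⟩
  simpa [dist_eq_norm, Real.dist_eq] using hu.norm_sub_sq_le hf hε hδ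

end InnerProduct

end IsTikhonovFamily

/-- If a convex continuous function `f` on a real Hilbert space attains its
infimum and, for every `ε > 0`, `u ε` minimizes `f + ε‖·‖²`, then the family
`u ε` converges strongly, as `ε → 0⁺`, to a minimizer `u*` of `f` of minimal
norm among all minimizers. -/
theorem tikhonov_minimizers_strong_limit
    {H : Type*} [NormedAddCommGroup H] [InnerProductSpace ℝ H] [CompleteSpace H]
    (f : H → ℝ) (hconv : ConvexOn ℝ Set.univ f) (hcont : Continuous f)
    (hattain : ∃ v : H, ∀ w : H, f v ≤ f w)
    (u : ℝ → H)
    (hmin : ∀ ε : ℝ, 0 < ε → ∀ v : H, f (u ε) + ε * ‖u ε‖ ^ 2 ≤ f v + ε * ‖v‖ ^ 2) :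
    ∃ ustar : H,
      (∀ v : H, f ustar ≤ f v) ∧
      (∀ v : H, (∀ w : H, f v ≤ f w) → ‖ustar‖ ≤ ‖v‖) ∧
      Tendsto u (nhdsWithin 0 (Ioi 0)) (nhds ustar) := by
  have hu : IsTikhonovFamily f u := hmin
  obtain ⟨ustar, hlim⟩ := CompleteSpace.complete (hu.cauchy_map hconv hattain)
  exact ⟨ustar, hu.forall_le_of_tendsto hcont hlim,
    fun _ hv => hu.norm_le_of_tendsto hlim hv, hlim⟩
end
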